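/- arXiv:2310.07999 — 4 statements merged into one kernel-verified Lean document; each statement's English description precedes it below -/
import Mathlib

section
/- Let D_S ≥ 1 and D_T ≥ D_S with k = ⌊D_T/D_S⌋. For every x ∈ ℝ^{D_S}, the (population) variance of the average-expanded vector satisfies Var[V_avg(x)] = η²·Var[x], where η² = k·D_S/D_T; here Var[y] of a vector y ∈ ℝ^D denotes (1/D)·∑_i (y[i] − E[y])² with E[y] = (1/D)·∑_i y[i]. -/
/-! The expanded vector consists of `k = DT / DS` full copies of `x` followed by `DT - k * DS`
entries equal to the mean of `x`. So its mean is that of `x`, the tail contributes nothing to the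
sum of squared deviations, and the copies contribute `k` times that of `x`; dividing by `DT`
instead of `DS` gives the factor `k * DS / DT`. -/

/-- Index bound for the tail part of an expansion from dimension `DS` to `DT`. -/
theorem sub_lt_mod (DS DT i : ℕ) (hDS : 0 < DS) (hi : i < DT) (h2 : DT / DS * DS ≤ i) :
    i - DT / DS * DS < DT % DS := by
  have h := Nat.div_add_mod' DT DS
  set m := DT / DS * DS
  omega

/-- Average expansion `V_avg` from `ℝ^{DS}` to `ℝ^{DT}`. -/
noncomputable def vAvg (DS DT : ℕ) (hDS : 0 < DS) (x : Fin DS → ℝ) : Fin DT → ℝ :=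
  fun i => if i.val < DT / DS * DS then x ⟨i.val % DS, Nat.mod_lt _ hDS⟩
           else (∑ j, x j) / (DS : ℝ)

/-- Zero expansion `V_zero` from `ℝ^{DS}` to `ℝ^{DT}`. -/
def vZero (DS DT : ℕ) (hDS : 0 < DS) (x : Fin DS → ℝ) : Fin DT → ℝ :=
  fun i => if i.val < DT / DS * DS then x ⟨i.val % DS, Nat.mod_lt _ hDS⟩ else 0

/-- Circular expansion `V_circ` from `ℝ^{DS}` to `ℝ^{DT}`. -/
def vCirc (DS DT : ℕ) (hDS : 0 < DS) (x : Fin DS → ℝ) : Fin DT → ℝ :=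
  fun i => x ⟨i.val % DS, Nat.mod_lt _ hDS⟩

/-- Mean of a vector. -/
noncomputable def meanV {D : ℕ} (x : Fin D → ℝ) : ℝ := (∑ i, x i) / (D : ℝ)

/-- Population variance of a vector. -/
noncomputable def varV {D : ℕ} (x : Fin D → ℝ) : ℝ := (∑ i, (x i - meanV x) ^ 2) / (D : ℝ)

open Finset Function

theorem Function.Periodic.sum_range_mul {M : Type*} [AddCommMonoid M] {f : ℕ → M} {n : ℕ}
    (hf : Periodic f n) (k : ℕ) : ∑ i ∈ range (k * n), f i = k • ∑ i ∈ range n, f i := by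
  induction k with
  | zero => simp
  | succ k ih =>
    rw [Nat.succ_mul, sum_range_add, ih, succ_nsmul]
    congr 1
    exact sum_congr rfl fun i _ => by rw [add_comm]; simpa using hf.nat_mul k i

theorem Finset.sum_range_ite_lt {M : Type*} [AddCommMonoid M] (f : ℕ → M) (c : M) {m n : ℕ}
    (h : m ≤ n) : ∑ i ∈ range n, (if i < m then f i else c) = ∑ i ∈ range m, f i + (n - m) • c := by
  rw [← sum_range_add_sum_Ico _ h]
  congr 1
  · exact sum_congr rfl fun i hi => if_pos (mem_range.1 hi)
  · rw [sum_congr rfl fun i hi => if_neg (mem_Ico.1 hi).1.not_gt, sum_const, Nat.card_Ico]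

section vAvg

variable {DS DT : ℕ} (hDS : 0 < DS) (x : Fin DS → ℝ)

theorem sum_comp_vAvg (F : ℝ → ℝ) :
    ∑ i, F (vAvg DS DT hDS x i)
      = (DT / DS : ℕ) * ∑ j, F (x j) + (DT - DT / DS * DS : ℕ) * F (meanV x) := by
  set g : ℕ → ℝ := fun i => F (x ⟨i % DS, Nat.mod_lt _ hDS⟩)
  have hg : Periodic g DS := fun i => by simp only [g, Nat.add_mod_right]
  have hg_range : ∑ i ∈ range DS, g i = ∑ j, F (x j) := by
    rw [← Fin.sum_univ_eq_sum_range]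
    exact sum_congr rfl fun j _ => by simp only [g, Nat.mod_eq_of_lt j.isLt]
  calc ∑ i, F (vAvg DS DT hDS x i)
      = ∑ i ∈ range DT, (if i < DT / DS * DS then g i else F (meanV x)) := by
        rw [← Fin.sum_univ_eq_sum_range (fun i => if i < DT / DS * DS then g i else F (meanV x))]
        exact sum_congr rfl fun i _ => apply_ite F _ _ _
    _ = (DT / DS : ℕ) * ∑ j, F (x j) + (DT - DT / DS * DS : ℕ) * F (meanV x) := by
        rw [sum_range_ite_lt _ _ (Nat.div_mul_le_self DT DS), hg.sum_range_mul, hg_range,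
          nsmul_eq_mul, nsmul_eq_mul]

theorem meanV_vAvg (hDT : DT ≠ 0) : meanV (vAvg DS DT hDS x) = meanV x := by
  have hsum : ∑ j, x j = DS * meanV x := by
    rw [meanV, mul_div_cancel₀ _ (Nat.cast_ne_zero.2 hDS.ne')]
  have hsum_vAvg := sum_comp_vAvg (DT := DT) hDS x id
  simp only [id, hsum, Nat.cast_sub (Nat.div_mul_le_self DT DS), Nat.cast_mul] at hsum_vAvg
  rw [meanV, hsum_vAvg, div_eq_iff (Nat.cast_ne_zero.2 hDT)]
  ring

theorem sum_sq_sub_meanV_vAvg :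
    ∑ i, (vAvg DS DT hDS x i - meanV x) ^ 2 = (DT / DS : ℕ) * ∑ j, (x j - meanV x) ^ 2 := by
  have h := sum_comp_vAvg (DT := DT) hDS x (fun y => (y - meanV x) ^ 2)
  beta_reduce at h
  rwa [sub_self, zero_pow two_ne_zero, mul_zero, add_zero] at h

end vAvg

theorem stmt_2_general (DS DT : ℕ) (hDS : 0 < DS) (x : Fin DS → ℝ) :
    varV (vAvg DS DT hDS x)
      = ((DT / DS * DS : ℕ) : ℝ) / (DT : ℝ) * varV x := by
  rcases Nat.eq_zero_or_pos DT with rfl | hDT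
  · simp [varV]
  rw [varV, meanV_vAvg hDS x hDT.ne', sum_sq_sub_meanV_vAvg, varV, Nat.cast_mul]
  field_simp

/-- the population variance of the average-expanded vector satisfies
`Var[V_avg(x)] = η² · Var[x]`, where `η² = ⌊D_T/D_S⌋·D_S/D_T`. -/
theorem stmt_2 (DS DT : ℕ) (hDS : 0 < DS) (hDT : DS ≤ DT) (x : Fin DS → ℝ) :
    varV (vAvg DS DT hDS x)
      = ((DT / DS * DS : ℕ) : ℝ) / (DT : ℝ) * varV x :=
  stmt_2_general DS DT hDS x
end

section
/- (Divisible case: circular LayerNorm expansion is lossless.) Let D_S ≥ 1 and D_T = k·D_S for an integer k ≥ 1, let μ, β ∈ ℝ^{D_S} and ε > 0. Then for every x ∈ ℝ^{D_S}, LN(V_circ(x); V_circ(μ), V_circ(β), ε) = V_circ(LN(x; μ, β, ε)). -/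
/-- LayerNorm with scale `μ`, bias `β` and constant `ε`. -/
noncomputable def layerNorm {D : ℕ} (x μ β : Fin D → ℝ) (ε : ℝ) : Fin D → ℝ :=
  fun i => μ i * (x i - meanV x) / Real.sqrt (varV x + ε) + β i

/-! Each coordinate of `x` appears exactly `k` times in `vCirc x`, so the expansion preserves the mean
and the population variance; LayerNorm acts coordinatewise given these two statistics, hence it
commutes with the expansion. -/

theorem Fin.sum_comp_modNat {M : Type*} [AddCommMonoid M] {k D : ℕ} (f : Fin D → M) :
    ∑ i : Fin (k * D), f i.modNat = k • ∑ j, f j := by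
  simpa [Fintype.sum_prod_type] using finProdFinEquiv.symm.sum_comp fun p : Fin k × Fin D => f p.2

section vCirc

variable {D k : ℕ} (hD : 0 < D)

theorem sum_vCirc (x : Fin D → ℝ) : ∑ i, vCirc D (k * D) hD x i = k * ∑ j, x j :=
  (Fin.sum_comp_modNat x).trans (nsmul_eq_mul _ _)

theorem meanV_vCirc (hk : 0 < k) (x : Fin D → ℝ) : meanV (vCirc D (k * D) hD x) = meanV x := by
  have hk' : (k : ℝ) ≠ 0 := by positivity
  rw [meanV, meanV, sum_vCirc, Nat.cast_mul, mul_div_mul_left _ _ hk']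

theorem varV_vCirc (hk : 0 < k) (x : Fin D → ℝ) : varV (vCirc D (k * D) hD x) = varV x := by
  have hk' : (k : ℝ) ≠ 0 := by positivity
  rw [varV, varV, meanV_vCirc hD hk, Nat.cast_mul, ← mul_div_mul_left _ (D : ℝ) hk',
    ← sum_vCirc hD]
  rfl

end vCirc

theorem stmt_4_general (DS k : ℕ) (hDS : 0 < DS) (hk : 1 ≤ k)
    (μ β : Fin DS → ℝ) (ε : ℝ) (x : Fin DS → ℝ) :
    layerNorm (vCirc DS (k * DS) hDS x) (vCirc DS (k * DS) hDS μ)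
        (vCirc DS (k * DS) hDS β) ε
      = vCirc DS (k * DS) hDS (layerNorm x μ β ε) := by
  funext i
  rw [layerNorm, meanV_vCirc hDS hk, varV_vCirc hDS hk]
  rfl

/-- divisible case: circular LayerNorm expansion is lossless:
for `D_T = k·D_S`, `LN(V_circ(x); V_circ(μ), V_circ(β), ε) = V_circ(LN(x; μ, β, ε))`. -/
theorem stmt_4 (DS k : ℕ) (hDS : 0 < DS) (hk : 1 ≤ k)
    (μ β : Fin DS → ℝ) (ε : ℝ) (hε : 0 < ε) (x : Fin DS → ℝ) :
    layerNorm (vCirc DS (k * DS) hDS x) (vCirc DS (k * DS) hDS μ)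
        (vCirc DS (k * DS) hDS β) ε
      = vCirc DS (k * DS) hDS (layerNorm x μ β ε) :=
  stmt_4_general DS k hDS hk μ β ε x
end

section
/- (Lossless expansion for RMS Norm.) Let D_S ≥ 1, D_T ≥ D_S, k = ⌊D_T/D_S⌋, r = D_T mod D_S, and η = √(k·D_S/D_T). Let μ ∈ ℝ^{D_S}, ε > 0, and let ζ ∈ ℝ^r be arbitrary. Define μ* ∈ ℝ^{D_T} by μ*[i] = η·μ[i mod D_S] for i < k·D_S and μ*[i] = η·ζ[i − k·D_S] otherwise, and set ε* = η²·ε. Then for every x ∈ ℝ^{D_S}, RMS(V_zero(x); μ*, ε*) = V_zero(RMS(x; μ, ε)). -/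
/-- RMS Norm with scale `μ` and constant `ε`. -/
noncomputable def rmsNorm {D : ℕ} (x μ : Fin D → ℝ) (ε : ℝ) : Fin D → ℝ :=
  fun i => μ i * x i / Real.sqrt ((∑ j, (x j) ^ 2) / (D : ℝ) + ε)

/-- `η = √(⌊D_T/D_S⌋·D_S/D_T)`. -/
noncomputable def eta (DS DT : ℕ) : ℝ :=
  Real.sqrt (((DT / DS * DS : ℕ) : ℝ) / (DT : ℝ))

/-- The expanded scale `μ*`: `μ*[i] = η·μ[i mod D_S]` for `i < ⌊D_T/D_S⌋·D_S`,
and `μ*[i] = η·ζ[i − ⌊D_T/D_S⌋·D_S]` otherwise. -/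
noncomputable def muStar (DS DT : ℕ) (hDS : 0 < DS) (η : ℝ) (μ : Fin DS → ℝ)
    (ζ : Fin (DT % DS) → ℝ) : Fin DT → ℝ :=
  fun i => if h : i.val < DT / DS * DS
    then η * μ ⟨i.val % DS, Nat.mod_lt _ hDS⟩
    else η * ζ ⟨i.val - DT / DS * DS, sub_lt_mod DS DT i.val hDS i.isLt (not_lt.mp h)⟩


/-! `V_zero(x)` consists of `k` copies of `x` followed by zeros, so its mean square is
`k·D_S/D_T = η²` times that of `x`. With `ε* = η²ε` the RMS denominator of `V_zero(x)` is therefore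
`η` times that of `x`, and this factor cancels the `η` in `μ*`; on the zero tail both sides vanish. -/

open Finset

theorem Finset.sum_range_mul_comp_mod {M : Type*} [AddCommMonoid M] {d : ℕ} (hd : 0 < d)
    (h : Fin d → M) (k : ℕ) :
    ∑ n ∈ range (k * d), h ⟨n % d, Nat.mod_lt n hd⟩ = k • ∑ j, h j := by
  induction k with
  | zero => simp
  | succ k ih =>
    have hperiod : ∑ j ∈ range d, h ⟨(k * d + j) % d, Nat.mod_lt _ hd⟩ = ∑ j, h j := by
      rw [sum_range]
      exact sum_congr rfl fun j _ => congrArg h (Fin.ext (by simp [Nat.mod_eq_of_lt j.is_lt]))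
    rw [Nat.succ_mul, sum_range_add, ih, hperiod, succ_nsmul]

theorem sum_comp_vZero {M : Type*} [AddCommMonoid M] (DS DT : ℕ) (hDS : 0 < DS)
    (x : Fin DS → ℝ) (f : ℝ → M) (hf : f 0 = 0) :
    ∑ i, f (vZero DS DT hDS x i) = (DT / DS) • ∑ j, f (x j) := by
  set g : ℕ → M := fun n => f (if n < DT / DS * DS then x ⟨n % DS, Nat.mod_lt _ hDS⟩ else 0)
  have htail : ∀ n ∈ Ico (DT / DS * DS) DT, g n = 0 := fun n hn => by
    simp [g, not_lt.mpr (mem_Ico.mp hn).1, hf]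
  have hhead : ∀ n ∈ range (DT / DS * DS), g n = f (x ⟨n % DS, Nat.mod_lt _ hDS⟩) :=
    fun n hn => by simp [g, mem_range.mp hn]
  calc ∑ i, f (vZero DS DT hDS x i) = ∑ n ∈ range DT, g n := Fin.sum_univ_eq_sum_range g DT
    _ = ∑ n ∈ range (DT / DS * DS), g n := by
      rw [← sum_range_add_sum_Ico g (Nat.div_mul_le_self DT DS), sum_eq_zero htail, add_zero]
    _ = (DT / DS) • ∑ j, f (x j) := by
      rw [sum_congr rfl hhead]
      exact sum_range_mul_comp_mod hDS (fun j => f (x j)) (DT / DS)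

theorem eta_sq (DS DT : ℕ) : eta DS DT ^ 2 = ((DT / DS * DS : ℕ) : ℝ) / DT :=
  Real.sq_sqrt (by positivity)

theorem eta_pos {DS DT : ℕ} (h : 0 < DT / DS * DS) : 0 < eta DS DT := by
  have hDT : 0 < DT := h.trans_le (Nat.div_mul_le_self DT DS)
  exact Real.sqrt_pos.mpr (by positivity)

theorem meanSq_vZero_add_eta_sq_mul (DS DT : ℕ) (hDS : 0 < DS) (x : Fin DS → ℝ) (ε : ℝ) :
    (∑ i, vZero DS DT hDS x i ^ 2) / DT + eta DS DT ^ 2 * ε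
      = eta DS DT ^ 2 * ((∑ j, x j ^ 2) / DS + ε) := by
  rw [sum_comp_vZero DS DT hDS x (· ^ 2) (zero_pow two_ne_zero), eta_sq, nsmul_eq_mul]
  field_simp
  push_cast
  ring

theorem sqrt_meanSq_vZero_add_eta_sq_mul (DS DT : ℕ) (hDS : 0 < DS) (x : Fin DS → ℝ) (ε : ℝ) :
    √((∑ i, vZero DS DT hDS x i ^ 2) / DT + eta DS DT ^ 2 * ε)
      = eta DS DT * √((∑ j, x j ^ 2) / DS + ε) := by
  have hη : 0 ≤ eta DS DT := Real.sqrt_nonneg _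
  rw [meanSq_vZero_add_eta_sq_mul, Real.sqrt_mul (sq_nonneg _), Real.sqrt_sq hη]

theorem stmt_6_general (DS DT : ℕ) (hDS : 0 < DS)
    (μ : Fin DS → ℝ) (ε : ℝ)
    (ζ : Fin (DT % DS) → ℝ) (x : Fin DS → ℝ) :
    rmsNorm (vZero DS DT hDS x) (muStar DS DT hDS (eta DS DT) μ ζ) ((eta DS DT) ^ 2 * ε)
      = vZero DS DT hDS (rmsNorm x μ ε) := by
  funext i
  simp only [rmsNorm, sqrt_meanSq_vZero_add_eta_sq_mul]
  by_cases hi : i.val < DT / DS * DS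
  · have hη : eta DS DT ≠ 0 := (eta_pos (Nat.zero_lt_of_lt hi)).ne'
    simp only [vZero, muStar, hi, if_true, dif_pos, rmsNorm]
    rw [mul_assoc, mul_div_mul_left _ _ hη]
  · simp [vZero, muStar, hi]

/-- lossless expansion for RMS Norm:
`RMS(V_zero(x); μ*, η²·ε) = V_zero(RMS(x; μ, ε))`. -/
theorem stmt_6 (DS DT : ℕ) (hDS : 0 < DS) (hDT : DS ≤ DT)
    (μ : Fin DS → ℝ) (ε : ℝ) (hε : 0 < ε)
    (ζ : Fin (DT % DS) → ℝ) (x : Fin DS → ℝ) :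
    rmsNorm (vZero DS DT hDS x) (muStar DS DT hDS (eta DS DT) μ ζ) ((eta DS DT) ^ 2 * ε)
      = vZero DS DT hDS (rmsNorm x μ ε) :=
  stmt_6_general DS DT hDS μ ε ζ x
end

section
/- (Matrix row-average expansion / average width expansion of a fully-connected layer.) Let M ∈ ℝ^{D_S×P}, b ∈ ℝ^{D_S}, and let m = (1/D_S)·∑_{j<D_S} M[j,:] be the row average. Define M* ∈ ℝ^{D_T×P} by M*[i,:] = M[i mod D_S,:] for i < k·D_S and M*[i,:] = m for k·D_S ≤ i < D_T. Then for every x ∈ ℝ^P, M*·x + V_avg(b) = V_avg(M·x + b); in particular M*·x = V_avg(M·x). -/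
/-- Matrix row-average expansion: repeat the rows of `M` cyclically for the first
`⌊D_T/D_S⌋·D_S` rows and fill the remaining rows with the row average of `M`. -/
noncomputable def rowAvg (DS DT P : ℕ) (hDS : 0 < DS) (M : Matrix (Fin DS) (Fin P) ℝ) :
    Matrix (Fin DT) (Fin P) ℝ :=
  fun i j => if i.val < DT / DS * DS then M ⟨i.val % DS, Nat.mod_lt _ hDS⟩ j
             else (∑ l, M l j) / (DS : ℝ)

/-- matrix row-average expansion / average width expansion of an
FC-layer: `M*·x + V_avg(b) = V_avg(M·x + b)`; in particular `M*·x = V_avg(M·x)`. -/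
theorem stmt_7 (DS DT P : ℕ) (hDS : 0 < DS) (hDT : DS ≤ DT)
    (M : Matrix (Fin DS) (Fin P) ℝ) (b : Fin DS → ℝ) (x : Fin P → ℝ) :
    (rowAvg DS DT P hDS M).mulVec x + vAvg DS DT hDS b
        = vAvg DS DT hDS (M.mulVec x + b) ∧
    (rowAvg DS DT P hDS M).mulVec x = vAvg DS DT hDS (M.mulVec x) := by
  have key : (rowAvg DS DT P hDS M).mulVec x = vAvg DS DT hDS (M.mulVec x) := by
    funext i
    simp only [Matrix.mulVec, dotProduct, rowAvg, vAvg]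
    split
    · rfl
    · simp only [div_mul_eq_mul_div, Finset.sum_mul, ← Finset.sum_div]
      rw [Finset.sum_comm]
  refine ⟨?_, key⟩
  rw [key]
  funext i
  simp only [vAvg, Pi.add_apply]
  split
  · rfl
  · rw [Finset.sum_add_distrib, add_div]
end
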